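/- Every subspace (closed linear subspace with the induced norm) of c₀ is strongly Gelfand–Phillips: if E is a closed subspace of c₀ then the sequence of restricted coordinate functionals (e_n'|_E) is weak* null in E' and every bounded subset B of E with sup_{x∈B} |e_n'(x)| → 0 is totally bounded. -/

import Mathlib

open Filter Topology Bornology

noncomputable section

variable {𝕜 E F : Type*} [RCLike 𝕜] [NormedAddCommGroup E] [NormedSpace 𝕜 E]
  [NormedAddCommGroup F] [NormedSpace 𝕜 F]

/-- `c₀` over `𝕜`: scalar sequences vanishing at infinity, with the sup norm. -/
abbrev czero (𝕜 : Type*) [RCLike 𝕜] := ZeroAtInftyContinuousMap ℕ 𝕜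

/-- A sequence of functionals is weak* null if it converges to `0` pointwise. -/
def WeakStarNull (χ : ℕ → E →L[𝕜] 𝕜) : Prop :=
  ∀ x : E, Tendsto (fun n => χ n x) atTop (𝓝 0)

/-- `sup_{x ∈ B} |χ n x| → 0`. -/
def UnifNull (χ : ℕ → E →L[𝕜] 𝕜) (B : Set E) : Prop :=
  Tendsto (fun n => ⨆ x : B, ‖χ n (x : E)‖) atTop (𝓝 0)

/-- A set is limited if every weak* null sequence converges to `0` uniformly on it. -/
def Limited (𝕜 : Type*) [RCLike 𝕜] {E : Type*} [NormedAddCommGroup E]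
    [NormedSpace 𝕜 E] (B : Set E) : Prop :=
  ∀ χ : ℕ → E →L[𝕜] 𝕜, WeakStarNull χ → UnifNull χ B

/-- A Banach space is Gelfand–Phillips if every (bounded) limited set is totally bounded. -/
def GelfandPhillips (𝕜 E : Type*) [RCLike 𝕜] [NormedAddCommGroup E]
    [NormedSpace 𝕜 E] : Prop :=
  ∀ B : Set E, IsBounded B → Limited 𝕜 B → TotallyBounded B

/-! A bounded set of `c₀` on which the coordinates tend to `0` uniformly is, up to `ε`, determined
by finitely many coordinates: beyond some `N` they are all below `ε / 4` on the set, and the first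
`N` coordinates range over a bounded, hence totally bounded, subset of `𝕜 ^ N`. -/

theorem Metric.totallyBounded_of_forall_exists_totallyBounded_image {α : Type*}
    [PseudoMetricSpace α] {s : Set α}
    (h : ∀ ε > 0, ∃ (β : Type*) (_ : PseudoMetricSpace β) (P : α → β),
      TotallyBounded (P '' s) ∧ ∃ δ > 0, ∀ x ∈ s, ∀ y ∈ s, dist (P x) (P y) < δ → dist x y < ε) :
    TotallyBounded s := by
  refine Metric.totallyBounded_iff.2 fun ε hε => ?_
  obtain ⟨β, _, P, hPs, δ, hδ, hP⟩ := h ε hε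
  obtain ⟨u, hus, hu, hcover⟩ := Set.exists_subset_image_finite_and.1
    (Metric.finite_approx_of_totallyBounded hPs δ hδ)
  refine ⟨u, hu, fun x hx => ?_⟩
  obtain ⟨_, ⟨y, hy, rfl⟩, hxy⟩ := Set.mem_iUnion₂.1 (hcover (Set.mem_image_of_mem P hx))
  exact Set.mem_iUnion₂.2 ⟨y, hy, hP x hx y (hus hy) hxy⟩

theorem Filter.Tendsto.eventually_forall_lt_of_iSup {ι α : Type*} {l : Filter ι} {s : Set α}
    {g : ι → α → ℝ} (h : Tendsto (fun i => ⨆ x : s, g i x) l (𝓝 0))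
    (hbdd : ∀ i, BddAbove (g i '' s)) {ε : ℝ} (hε : 0 < ε) :
    ∀ᶠ i in l, ∀ x ∈ s, g i x < ε :=
  (h.eventually (gt_mem_nhds hε)).mono fun i hi x hx =>
    (le_ciSup (by simpa only [Set.image_eq_range] using hbdd i) (⟨x, hx⟩ : s)).trans_lt hi

open scoped ZeroAtInfty

namespace ZeroAtInftyContinuousMap

variable {α β : Type*} [TopologicalSpace α]

theorem norm_apply_le [SeminormedAddCommGroup β] (f : C₀(α, β)) (x : α) : ‖f x‖ ≤ ‖f‖ :=
  f.toBCF.norm_coe_le_norm x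

theorem dist_apply_le [PseudoMetricSpace β] [Zero β] (f g : C₀(α, β)) (x : α) :
    dist (f x) (g x) ≤ dist f g :=
  BoundedContinuousFunction.dist_coe_le_dist (f := f.toBCF) (g := g.toBCF) x

theorem dist_le [PseudoMetricSpace β] [Zero β] {f g : C₀(α, β)} {C : ℝ} (hC : 0 ≤ C) :
    dist f g ≤ C ↔ ∀ x, dist (f x) (g x) ≤ C :=
  BoundedContinuousFunction.dist_le hC

def evalCLM (𝕜 : Type*) [NormedField 𝕜] [SeminormedAddCommGroup β] [NormedSpace 𝕜 β] (x : α) :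
    C₀(α, β) →L[𝕜] β :=
  LinearMap.mkContinuous
    { toFun := fun f => f x
      map_add' := fun _ _ => rfl
      map_smul' := fun _ _ => rfl } 1 fun f => by simpa using norm_apply_le f x

@[simp]
theorem evalCLM_apply (𝕜 : Type*) [NormedField 𝕜] [SeminormedAddCommGroup β] [NormedSpace 𝕜 β]
    (x : α) (f : C₀(α, β)) : evalCLM 𝕜 x f = f x := rfl

theorem tendsto_atTop_zero [Zero β] [TopologicalSpace β] (f : C₀(ℕ, β)) :
    Tendsto f atTop (𝓝 0) :=
  cocompact_eq_atTop (α := ℕ) ▸ zero_at_infty f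

theorem totallyBounded_of_isBounded_of_tail [NormedAddCommGroup β] [ProperSpace β]
    {s : Set C₀(ℕ, β)} (hs : IsBounded s)
    (htail : ∀ ε > 0, ∀ᶠ n in atTop, ∀ f ∈ s, ‖f n‖ < ε) : TotallyBounded s := by
  refine Metric.totallyBounded_of_forall_exists_totallyBounded_image fun ε hε => ?_
  obtain ⟨N, hN⟩ := (htail (ε / 4) (by positivity)).exists_forall_of_atTop
  refine ⟨Fin N → β, inferInstance, fun f i => f i, ?_, ε / 4, by positivity,
    fun f hf g hg hfg => ?_⟩
  · have hP : LipschitzWith 1 fun (f : C₀(ℕ, β)) (i : Fin N) => f i :=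
      LipschitzWith.mk_one fun f g => (dist_pi_le_iff dist_nonneg).2 fun i => dist_apply_le f g i
    exact (hP.isBounded_image hs).isCompact_closure.totallyBounded.subset subset_closure
  · have hcoord : ∀ n, dist (f n) (g n) ≤ ε / 2 := by
      intro n
      rcases lt_or_ge n N with hn | hn
      · exact (dist_le_pi_dist (fun i : Fin N => f i) (fun i => g i) ⟨n, hn⟩).trans
          (by linarith)
      · calc dist (f n) (g n) ≤ ‖f n‖ + ‖g n‖ := dist_le_norm_add_norm _ _
          _ ≤ ε / 2 := by linarith [hN n hn f hf, hN n hn g hg]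
    exact ((dist_le (by positivity)).2 hcoord).trans_lt (by linarith)

end ZeroAtInftyContinuousMap

theorem stmt10_general {𝕜 : Type*} [RCLike 𝕜] (E : Submodule 𝕜 (czero 𝕜)) :
    ∃ χ : ℕ → E →L[𝕜] 𝕜,
      (∀ (n : ℕ) (x : E), χ n x = (x : czero 𝕜) n) ∧
      WeakStarNull (𝕜 := 𝕜) (E := ↥E) χ ∧
      ∀ B : Set E, IsBounded B →
        Tendsto (fun n => ⨆ x : B, ‖χ n (x : E)‖) atTop (𝓝 0) →
        TotallyBounded B := by
  refine ⟨fun n => (ZeroAtInftyContinuousMap.evalCLM 𝕜 n).comp E.subtypeL, fun _ _ => rfl,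
    fun x => (x : czero 𝕜).tendsto_atTop_zero, fun B hB hsup => ?_⟩
  simp only [ContinuousLinearMap.comp_apply, ZeroAtInftyContinuousMap.evalCLM_apply,
    Submodule.subtypeL_apply] at hsup
  have hB' : IsBounded (((↑) : E → czero 𝕜) '' B) := isBounded_image_subtype_val.2 hB
  obtain ⟨C, hC⟩ := hB'.exists_norm_le
  have htail (ε : ℝ) (hε : 0 < ε) :
      ∀ᶠ n in atTop, ∀ f ∈ ((↑) : E → czero 𝕜) '' B, ‖f n‖ < ε := by
    simp only [Set.forall_mem_image]
    refine hsup.eventually_forall_lt_of_iSup (fun n => ⟨C, ?_⟩) hε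
    rintro _ ⟨x, hx, rfl⟩
    exact ((x : czero 𝕜).norm_apply_le n).trans (hC _ ⟨x, hx, rfl⟩)
  exact (totallyBounded_preimage isUniformEmbedding_subtype_val.isUniformInducing
    (ZeroAtInftyContinuousMap.totallyBounded_of_isBounded_of_tail hB' htail)).subset
      (Set.subset_preimage_image _ _)

set_option maxHeartbeats 1000000 in
set_option synthInstance.maxHeartbeats 400000 in
theorem stmt10 {𝕜 : Type*} [RCLike 𝕜] (E : Submodule 𝕜 (czero 𝕜))
    (hE : IsClosed (E : Set (czero 𝕜))) :
    ∃ χ : ℕ → E →L[𝕜] 𝕜,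
      (∀ (n : ℕ) (x : E), χ n x = (x : czero 𝕜) n) ∧
      WeakStarNull (𝕜 := 𝕜) (E := ↥E) χ ∧
      ∀ B : Set E, IsBounded B →
        Tendsto (fun n => ⨆ x : B, ‖χ n (x : E)‖) atTop (𝓝 0) →
        TotallyBounded B :=
  stmt10_general E
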